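/- arXiv:1711.00994 — 3 statements merged into one kernel-verified Lean document; each statement's English description precedes it below -/
import Mathlib

section
/- Let p > 1 and let η, η*, ψ_R, ψ*_R, P(R) be as in the context. There exists a constant C₃ > 0, depending only on η and p, such that for every R > 0 and every (x,t) ∈ P(R), |∇_x ψ_R(x,t)| ≤ C₃ R^{-1} |x| (log|x|) [ψ*_R(x,t)]^{1/p}, where ∇_x denotes the gradient in the x-variables and |∇_x ψ_R| its Euclidean norm. -/
/-!
In the variable `x`, `ψ_R(·, t) = G(|x|)` is radial with `G(r) = η(s)^{2p'}`,
`s = ((r - 1)² + t)/R`, so `|∇ₓψ_R| ≤ |G'(|x|)| = 2p' η(s)^{2p'-1} |η'(s)| · 2(|x| - 1)/R`.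
Where `s < 1/2`, `η'(s) = 0`; this is why the weaker weight `ψ*_R`, which vanishes there, suffices.
For `s ∈ [1/2, 1]`, `|η'|` is bounded by continuity, and `η^{2p'-1} ≤ η^{2p'/p}` because
`0 ≤ η ≤ 1` and `2p' - 2p'/p = 2`. Finally `|x| - 1 ≤ |x| log |x|`.
-/

open MeasureTheory Real Set

noncomputable section

/-- The plane `ℝ²` with the Euclidean norm. -/
abbrev E2 := EuclideanSpace ℝ (Fin 2)

/-- The exterior domain `Ω = {x ∈ ℝ² : |x| > 1}`. -/
def Omega : Set E2 := {x : E2 | 1 < ‖x‖}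

/-- `η` is of class `C²` on `[0,∞)`, equals `1` on `[0,1/2]`, is nonincreasing on `[1/2,1]`
and vanishes on `[1,∞)`. -/
def etaOK (η : ℝ → ℝ) : Prop :=
  ContDiffOn ℝ 2 η (Set.Ici 0) ∧
  (∀ s ∈ Set.Icc (0 : ℝ) (1 / 2), η s = 1) ∧
  AntitoneOn η (Set.Icc (1 / 2 : ℝ) 1) ∧
  (∀ s : ℝ, 1 ≤ s → η s = 0)

/-- `η*(s) = 0` for `s < 1/2` and `η*(s) = η(s)` for `s ≥ 1/2`. -/
def etaStar (η : ℝ → ℝ) (s : ℝ) : ℝ := if s < 1 / 2 then 0 else η s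

/-- `ψ_R(x,t) = [η(((|x|-1)² + t)/R)]^{2p'}` with `p' = p/(p-1)`. -/
def psi (η : ℝ → ℝ) (p R : ℝ) (x : E2) (t : ℝ) : ℝ :=
  η (((‖x‖ - 1) ^ 2 + t) / R) ^ (2 * (p / (p - 1)))

/-- `ψ*_R(x,t) = [η*(((|x|-1)² + t)/R)]^{2p'}` with `p' = p/(p-1)`. -/
def psiStar (η : ℝ → ℝ) (p R : ℝ) (x : E2) (t : ℝ) : ℝ :=
  etaStar η (((‖x‖ - 1) ^ 2 + t) / R) ^ (2 * (p / (p - 1)))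

/-- `P(R) = {(x,t) ∈ Ω × [0,∞) : (|x|-1)² + t ≤ R}`. -/
def Pset (R : ℝ) : Set (E2 × ℝ) :=
  {q : E2 × ℝ | q.1 ∈ Omega ∧ 0 ≤ q.2 ∧ (‖q.1‖ - 1) ^ 2 + q.2 ≤ R}

/-- The Laplacian in the `x`-variables: the sum of the two second partial derivatives. -/
def lapx {F : Type*} [NormedAddCommGroup F] [NormedSpace ℝ F] (f : E2 → F) (x : E2) : F :=
  ∑ i : Fin 2, iteratedDeriv 2 (fun s : ℝ => f (x + s • EuclideanSpace.single i (1 : ℝ))) 0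

theorem rpow_le_rpow_rpow_of_le_one {a c d e : ℝ} (ha0 : 0 ≤ a) (ha1 : a ≤ 1) (hce : 0 ≤ c * e)
    (hd : c * e ≤ d) : a ^ d ≤ (a ^ c) ^ e := by
  rw [← Real.rpow_mul ha0]
  exact Real.rpow_le_rpow_of_exponent_ge' ha0 ha1 hce hd

namespace etaOK

variable {η : ℝ → ℝ}

theorem nonneg (hη : etaOK η) {s : ℝ} (hs : 0 ≤ s) : 0 ≤ η s := by
  rcases le_total s (1 / 2) with hs2 | hs2
  · rw [hη.2.1 s ⟨hs, hs2⟩]; exact zero_le_one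
  rcases le_total s 1 with hs1 | hs1
  · calc (0 : ℝ) = η 1 := (hη.2.2.2 1 le_rfl).symm
      _ ≤ η s := hη.2.2.1 ⟨hs2, hs1⟩ ⟨by norm_num, le_rfl⟩ hs1
  · exact (hη.2.2.2 s hs1).ge

theorem le_one (hη : etaOK η) {s : ℝ} (hs : 1 / 2 ≤ s) : η s ≤ 1 := by
  rcases le_total s 1 with hs1 | hs1
  · calc η s ≤ η (1 / 2) := hη.2.2.1 ⟨le_rfl, by norm_num⟩ ⟨hs, hs1⟩ hs
      _ = 1 := hη.2.1 _ ⟨by norm_num, le_rfl⟩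
  · rw [hη.2.2.2 s hs1]; exact zero_le_one

theorem etaStar_nonneg (hη : etaOK η) (s : ℝ) : 0 ≤ etaStar η s := by
  unfold etaStar
  split_ifs with hs
  · exact le_rfl
  · exact hη.nonneg (le_trans (by norm_num) (not_lt.mp hs))

theorem differentiableAt (hη : etaOK η) {s : ℝ} (hs : 0 < s) : DifferentiableAt ℝ η s :=
  (hη.1.contDiffAt (Ici_mem_nhds hs)).differentiableAt (by norm_num)

theorem deriv_eq_zero_of_lt_half (hη : etaOK η) {s : ℝ} (hs0 : 0 < s) (hs : s < 1 / 2) :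
    deriv η s = 0 := by
  have hconst : η =ᶠ[nhds s] fun _ => 1 := by
    filter_upwards [Ioo_mem_nhds hs0 hs] with u hu
    exact hη.2.1 u ⟨hu.1.le, hu.2.le⟩
  rw [hconst.deriv_eq, deriv_const]

theorem exists_abs_deriv_le (hη : etaOK η) :
    ∃ M > 0, ∀ s ∈ Icc (1 / 2 : ℝ) 1, |deriv η s| ≤ M := by
  have hcont : ContinuousOn (deriv η) (Ioi 0) :=
    (hη.1.mono (Ioi_subset_Ici le_rfl)).continuousOn_deriv_of_isOpen isOpen_Ioi (by norm_num)
  obtain ⟨M, hM⟩ := (isCompact_Icc (a := (1 / 2 : ℝ)) (b := 1)).exists_bound_of_continuousOn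
    (hcont.mono fun s hs => lt_of_lt_of_le (by norm_num) hs.1)
  exact ⟨max M 1, by positivity, fun s hs =>
    le_max_of_le_left (by simpa only [Real.norm_eq_abs] using hM s hs)⟩

theorem exists_abs_deriv_mul_rpow_le (hη : etaOK η) {p : ℝ} (hp : 1 < p) :
    ∃ M > 0, ∀ s ∈ Ioc (0 : ℝ) 1, |deriv η s| * η s ^ (2 * (p / (p - 1)) - 1)
      ≤ M * (etaStar η s ^ (2 * (p / (p - 1)))) ^ (1 / p) := by
  obtain ⟨M, hM0, hM⟩ := hη.exists_abs_deriv_le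
  refine ⟨M, hM0, fun s ⟨hs0, hs1⟩ => ?_⟩
  have hrhs : 0 ≤ M * (etaStar η s ^ (2 * (p / (p - 1)))) ^ (1 / p) :=
    mul_nonneg hM0.le (Real.rpow_nonneg (Real.rpow_nonneg (hη.etaStar_nonneg s) _) _)
  rcases lt_or_ge s (1 / 2) with hs | hs
  · rwa [hη.deriv_eq_zero_of_lt_half hs0 hs, abs_zero, zero_mul]
  have hp0 : 0 < p := by linarith
  have hp1 : 0 < p - 1 := by linarith
  have hexp : 2 * (p / (p - 1)) * (1 / p) = 2 * (p / (p - 1)) - 2 := by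
    field_simp
    ring
  have hpow : η s ^ (2 * (p / (p - 1)) - 1) ≤ (η s ^ (2 * (p / (p - 1)))) ^ (1 / p) :=
    rpow_le_rpow_rpow_of_le_one (hη.nonneg hs0.le) (hη.le_one hs) (by positivity) (by linarith)
  rw [etaStar, if_neg (not_lt.mpr hs)]
  exact mul_le_mul (hM s ⟨hs, hs1⟩) hpow (Real.rpow_nonneg (hη.nonneg hs0.le) _) hM0.le

end etaOK

theorem norm_fderiv_comp_norm_le {E : Type*} [NormedAddCommGroup E] [InnerProductSpace ℝ E]
    {g : ℝ → ℝ} {g' : ℝ} {x : E} (hx : x ≠ 0) (hg : HasDerivAt g g' ‖x‖) :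
    ‖fderiv ℝ (fun y => g ‖y‖) x‖ ≤ |g'| := by
  have hnorm : HasFDerivAt (‖·‖) (fderiv ℝ (‖·‖) x) x :=
    ((contDiffAt_norm ℝ hx).differentiableAt one_ne_zero).hasFDerivAt
  have hcomp : HasFDerivAt (fun y => g ‖y‖) (g' • fderiv ℝ (‖·‖) x) x :=
    hg.comp_hasFDerivAt x hnorm
  rw [hcomp.fderiv]
  calc ‖g' • fderiv ℝ (‖·‖) x‖ ≤ ‖g'‖ * ‖fderiv ℝ (‖·‖) x‖ :=
      ContinuousLinearMap.opNorm_smul_le _ _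
    _ ≤ ‖g'‖ * 1 := by
      gcongr
      simpa using norm_fderiv_le_of_lipschitz ℝ (lipschitzWith_one_norm (E := E)) (x₀ := x)
    _ = |g'| := by rw [mul_one, Real.norm_eq_abs]

theorem hasDerivAt_rpow_comp_quadratic {η : ℝ → ℝ} {c R t r : ℝ} (hc : 1 ≤ c)
    (hη : DifferentiableAt ℝ η (((r - 1) ^ 2 + t) / R)) :
    HasDerivAt (fun r => η (((r - 1) ^ 2 + t) / R) ^ c)
      (c * η (((r - 1) ^ 2 + t) / R) ^ (c - 1) *
        (deriv η (((r - 1) ^ 2 + t) / R) * (2 * (r - 1) / R))) r := by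
  have hinner : HasDerivAt (fun r => ((r - 1) ^ 2 + t) / R) (2 * (r - 1) / R) r := by
    refine ((((hasDerivAt_id r).sub_const 1).pow 2).add_const t).div_const R |>.congr_deriv ?_
    simp only [id_eq]
    push_cast
    ring
  exact (Real.hasDerivAt_rpow_const (Or.inr hc)).comp r (hη.hasDerivAt.comp r hinner)

theorem etaOK.norm_fderiv_psi_le {η : ℝ → ℝ} (hη : etaOK η) {p R t : ℝ} (hp : 1 < p)
    (hR : 0 < R) {x : E2} (hx : 1 < ‖x‖) (hs : 0 < ((‖x‖ - 1) ^ 2 + t) / R) :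
    ‖fderiv ℝ (fun y : E2 => psi η p R y t) x‖
      ≤ 2 * (2 * (p / (p - 1))) * R⁻¹ * (‖x‖ - 1) *
        (|deriv η (((‖x‖ - 1) ^ 2 + t) / R)| *
          η (((‖x‖ - 1) ^ 2 + t) / R) ^ (2 * (p / (p - 1)) - 1)) := by
  set c := 2 * (p / (p - 1))
  set s := ((‖x‖ - 1) ^ 2 + t) / R
  have hc : 1 ≤ c := by
    have : 1 < p / (p - 1) := (one_lt_div (by linarith)).mpr (by linarith)
    linarith
  have hB : 0 ≤ 2 * (‖x‖ - 1) / R := by apply div_nonneg _ hR.le; linarith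
  have hηpow : 0 ≤ η s ^ (c - 1) := Real.rpow_nonneg (hη.nonneg hs.le) _
  calc ‖fderiv ℝ (fun y : E2 => psi η p R y t) x‖
      ≤ |c * η s ^ (c - 1) * (deriv η s * (2 * (‖x‖ - 1) / R))| :=
        norm_fderiv_comp_norm_le (g := fun r => η (((r - 1) ^ 2 + t) / R) ^ c)
          (norm_pos_iff.mp (by linarith))
          (hasDerivAt_rpow_comp_quadratic hc (hη.differentiableAt hs))
    _ = 2 * c * R⁻¹ * (‖x‖ - 1) * (|deriv η s| * η s ^ (c - 1)) := by
        rw [abs_mul, abs_mul c, abs_mul (deriv η s), abs_of_nonneg hB,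
          abs_of_pos (by linarith : 0 < c), abs_of_nonneg hηpow]
        ring

/-- There is `C₃ > 0`, depending only on `η` and `p`, such that for all `R > 0` and
`(x,t) ∈ P(R)`, `|∇_x ψ_R(x,t)| ≤ C₃ R⁻¹ |x| (log |x|) [ψ*_R(x,t)]^{1/p}`. -/
theorem statement3 (p : ℝ) (hp : 1 < p) (η : ℝ → ℝ) (hη : etaOK η) :
    ∃ C₃ > (0 : ℝ), ∀ R > (0 : ℝ), ∀ q ∈ Pset R,
      ‖fderiv ℝ (fun x : E2 => psi η p R x q.2) q.1‖
        ≤ C₃ * R⁻¹ * ‖q.1‖ * Real.log ‖q.1‖ * psiStar η p R q.1 q.2 ^ (1 / p) := by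
  obtain ⟨M, hM0, hM⟩ := hη.exists_abs_deriv_mul_rpow_le hp
  set c := 2 * (p / (p - 1))
  have hc0 : 0 < c := by
    have : 0 < p - 1 := by linarith
    have : 0 < p := by linarith
    positivity
  refine ⟨2 * c * M, by positivity, fun R hR ⟨x, t⟩ ⟨hx, _, hPR⟩ => ?_⟩
  have hx1 : 1 < ‖x‖ := hx
  set s := ((‖x‖ - 1) ^ 2 + t) / R
  have hs : s ∈ Ioc 0 1 := ⟨by apply div_pos _ hR; nlinarith, (div_le_one hR).mpr hPR⟩
  have hcoef : 0 ≤ 2 * c * R⁻¹ := by positivity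
  calc ‖fderiv ℝ (fun y : E2 => psi η p R y t) x‖
      ≤ 2 * c * R⁻¹ * (‖x‖ - 1) * (|deriv η s| * η s ^ (c - 1)) :=
        hη.norm_fderiv_psi_le hp hR hx1 hs.1
    _ ≤ 2 * c * R⁻¹ * (‖x‖ * Real.log ‖x‖) * (M * psiStar η p R x t ^ (1 / p)) :=
        mul_le_mul
          (mul_le_mul_of_nonneg_left (Real.self_sub_one_le_mul_log (norm_nonneg x)) hcoef)
          (hM s hs) (mul_nonneg (abs_nonneg _) (Real.rpow_nonneg (hη.nonneg hs.1.le) _))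
          (mul_nonneg hcoef (mul_nonneg (norm_nonneg x) (Real.log_nonneg hx1.le)))
    _ = 2 * c * M * R⁻¹ * ‖x‖ * Real.log ‖x‖ * psiStar η p R x t ^ (1 / p) := by ring
end
end

section
/- Let p > 1 and let η, η*, ψ_R, ψ*_R, P(R) be as in the context. Let T > 0, let w : Ω × [0,T) → [0,∞) be measurable and integrable on P(R) for every R ∈ (0,T), and for r ∈ (0,T) set y(r) = ∬_{P(r)} w(x,t) ψ*_r(x,t) dx dt. Then for every R ∈ (0,T), ∫_0^R y(r) r^{-1} dr ≤ (log 2) ∬_{P(R)} w(x,t) ψ_R(x,t) dx dt. -/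
open MeasureTheory Real Set

noncomputable section

/-!
Write `σ = (|x|-1)² + t`. By Tonelli the left side is
`∫ w(q) ∫₀ᴿ 1_{q ∈ P(r)} ψ*_r(q) r⁻¹ dr dq`.
For fixed `q ∈ P(R)` the inner integrand vanishes unless `σ ≤ r ≤ 2σ`: below `σ` the point `q`
is not in `P(r)`, above `2σ` we have `σ/r < 1/2` where `η*` vanishes. On `[σ, 2σ]` the cut-off
`η*(σ/r)` is at most `η(σ/R)`, because `σ/R ≤ σ/r` and `η` is nonincreasing on `[1/2, 1]`.
So the inner integral is at most `ψ_R(q) ∫_σ^{2σ} dr/r = ψ_R(q) log 2`.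
-/

theorem integral_integral_le_integral_of_lintegral_le {α β : Type*} [MeasurableSpace α]
    [MeasurableSpace β] {μ : Measure α} {ν : Measure β} [SFinite μ] [SFinite ν]
    {f : α → β → ℝ} {g : β → ℝ} (hf : Measurable (Function.uncurry f))
    (hf_nonneg : ∀ᵐ a ∂μ, 0 ≤ᵐ[ν] f a) (hg : Integrable g ν) (hg_nonneg : 0 ≤ᵐ[ν] g)
    (hfg : ∀ b, ∫⁻ a, ENNReal.ofReal (f a b) ∂μ ≤ ENNReal.ofReal (g b)) :
    ∫ a, ∫ b, f a b ∂ν ∂μ ≤ ∫ b, g b ∂ν := by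
  have hF : Measurable (Function.uncurry fun a b => ENNReal.ofReal (f a b)) := hf.ennreal_ofReal
  have htotal : ∫⁻ a, ∫⁻ b, ENNReal.ofReal (f a b) ∂ν ∂μ ≤ ∫⁻ b, ENNReal.ofReal (g b) ∂ν := by
    rw [lintegral_lintegral_swap hF.aemeasurable]
    exact lintegral_mono hfg
  have hfinite : ∫⁻ a, ∫⁻ b, ENNReal.ofReal (f a b) ∂ν ∂μ ≠ ⊤ :=
    (htotal.trans_lt hg.lintegral_lt_top).ne
  calc ∫ a, ∫ b, f a b ∂ν ∂μ = ∫ a, (∫⁻ b, ENNReal.ofReal (f a b) ∂ν).toReal ∂μ := by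
        refine integral_congr_ae (hf_nonneg.mono fun a ha => ?_)
        exact integral_eq_lintegral_of_nonneg_ae ha
          (hf.comp measurable_prodMk_left).aestronglyMeasurable
    _ = (∫⁻ a, ∫⁻ b, ENNReal.ofReal (f a b) ∂ν ∂μ).toReal :=
        integral_toReal hF.lintegral_prod_right'.aemeasurable
          (ae_lt_top hF.lintegral_prod_right' hfinite)
    _ ≤ (∫⁻ b, ENNReal.ofReal (g b) ∂ν).toReal :=
        ENNReal.toReal_mono hg.lintegral_lt_top.ne htotal
    _ = ∫ b, g b ∂ν := (integral_eq_lintegral_of_nonneg_ae hg_nonneg hg.1).symm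

theorem integral_Icc_two_mul_inv {σ : ℝ} (hσ : 0 < σ) : ∫ r in Icc σ (2 * σ), r⁻¹ = log 2 := by
  rw [integral_Icc_eq_integral_Ioc, ← intervalIntegral.integral_of_le (by linarith),
    integral_inv_of_pos hσ (by linarith), mul_div_cancel_right₀ _ hσ.ne']

theorem setLIntegral_ofReal_le_log_two_mul {s : Set ℝ} {h : ℝ → ℝ} {σ c : ℝ}
    (hs : MeasurableSet s) (hσ : 0 < σ) (hc : 0 ≤ c)
    (hh : ∀ r ∈ s, h r ≤ (Icc σ (2 * σ)).indicator (fun r => c * r⁻¹) r) :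
    ∫⁻ r in s, ENNReal.ofReal (h r) ≤ ENNReal.ofReal (log 2 * c) := by
  have hint : IntegrableOn (fun r : ℝ => c * r⁻¹) (Icc σ (2 * σ)) :=
    (continuousOn_const.mul
      (continuousOn_inv₀.mono fun r hr => (hσ.trans_le hr.1).ne')).integrableOn_Icc
  calc ∫⁻ r in s, ENNReal.ofReal (h r)
      ≤ ∫⁻ r in s, (Icc σ (2 * σ)).indicator (fun r => ENNReal.ofReal (c * r⁻¹)) r :=
        setLIntegral_mono' hs fun r hr => (ENNReal.ofReal_le_ofReal (hh r hr)).trans_eq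
          (congr_fun (indicator_comp_of_zero ENNReal.ofReal_zero) r).symm
    _ ≤ ∫⁻ r, (Icc σ (2 * σ)).indicator (fun r => ENNReal.ofReal (c * r⁻¹)) r :=
        setLIntegral_le_lintegral _ _
    _ = ENNReal.ofReal (∫ r in Icc σ (2 * σ), c * r⁻¹) := by
        rw [lintegral_indicator measurableSet_Icc, ofReal_integral_eq_lintegral_ofReal hint]
        exact (ae_restrict_mem measurableSet_Icc).mono fun r hr =>
          mul_nonneg hc (inv_nonneg.2 (hσ.le.trans hr.1))
    _ = ENNReal.ofReal (log 2 * c) := by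
        rw [integral_const_mul, integral_Icc_two_mul_inv hσ, mul_comm]

section Cutoff

variable {η : ℝ → ℝ}

theorem etaOK.nonneg_s6 (hη : etaOK η) {s : ℝ} (hs : 0 ≤ s) : 0 ≤ η s := by
  obtain ⟨-, hone, hanti, hzero⟩ := hη
  rcases le_or_gt s (1 / 2) with h | h
  · rw [hone s ⟨hs, h⟩]; norm_num
  rcases le_or_gt s 1 with h1 | h1
  · simpa [hzero 1 le_rfl] using hanti ⟨h.le, h1⟩ ⟨by norm_num, le_rfl⟩ h1
  · rw [hzero s h1.le]

theorem etaOK.le_one_s6 (hη : etaOK η) {s : ℝ} (hs : 0 ≤ s) : η s ≤ 1 := by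
  obtain ⟨-, hone, hanti, hzero⟩ := hη
  rcases le_or_gt s (1 / 2) with h | h
  · rw [hone s ⟨hs, h⟩]
  rcases le_or_gt s 1 with h1 | h1
  · rw [← hone (1 / 2) ⟨by norm_num, le_rfl⟩]
    exact hanti ⟨le_rfl, by norm_num⟩ ⟨h.le, h1⟩ h.le
  · rw [hzero s h1.le]; norm_num

theorem etaStar_nonneg (hη : etaOK η) (s : ℝ) : 0 ≤ etaStar η s := by
  unfold etaStar
  split_ifs with h
  · exact le_rfl
  · exact hη.nonneg_s6 (by linarith [not_lt.1 h])

theorem etaStar_le_eta (hη : etaOK η) {a b : ℝ} (ha : 0 ≤ a) (hab : a ≤ b) :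
    etaStar η b ≤ η a := by
  have hηa := hη.nonneg_s6 ha
  unfold etaStar
  split_ifs with hb
  · exact hηa
  push Not at hb
  obtain ⟨-, hone, hanti, hzero⟩ := hη
  rcases le_or_gt b 1 with hb1 | hb1
  · rcases le_or_gt (1 / 2) a with ha2 | ha2
    · exact hanti ⟨ha2, hab.trans hb1⟩ ⟨hb, hb1⟩ hab
    · rw [hone a ⟨ha, ha2.le⟩, ← hone (1 / 2) ⟨by norm_num, le_rfl⟩]
      exact hanti ⟨le_rfl, by norm_num⟩ ⟨hb, hb1⟩ hb
  · rwa [hzero b hb1.le]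

-- `η` is only continuous on `[0,∞)`, so measurability goes through `s ↦ η (max s (1/2))`.
theorem measurable_etaStar (hη : etaOK η) : Measurable (etaStar η) := by
  have hcont : Continuous fun s : ℝ => η (max s (1 / 2)) :=
    hη.1.continuousOn.comp_continuous (by fun_prop)
      fun s => mem_Ici.2 ((by norm_num : (0 : ℝ) ≤ 1 / 2).trans (le_max_right s _))
  have heq : etaStar η = (Ici (1 / 2 : ℝ)).indicator fun s => η (max s (1 / 2)) := by
    funext s
    by_cases h : s < 1 / 2
    · rw [etaStar, if_pos h, indicator_of_notMem (s := Ici _) (not_le.2 h)]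
    · rw [etaStar, if_neg h, indicator_of_mem (s := Ici _) (not_lt.1 h), max_eq_left (not_lt.1 h)]
  rw [heq]
  exact hcont.measurable.indicator measurableSet_Ici

end Cutoff

-- `R * s_R(x,t)` in the notation of the paper.
def parabolicGauge (q : E2 × ℝ) : ℝ := (‖q.1‖ - 1) ^ 2 + q.2

theorem continuous_parabolicGauge : Continuous parabolicGauge := by
  unfold parabolicGauge; fun_prop

theorem measurableSet_setOf_mem_Pset : MeasurableSet {z : ℝ × (E2 × ℝ) | z.2 ∈ Pset z.1} :=
  (measurableSet_lt measurable_const measurable_snd.fst.norm).inter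
    ((measurableSet_le measurable_const measurable_snd.snd).inter
      (measurableSet_le (continuous_parabolicGauge.measurable.comp measurable_snd) measurable_fst))

theorem measurableSet_Pset (r : ℝ) : MeasurableSet (Pset r) :=
  measurable_prodMk_left (x := r) measurableSet_setOf_mem_Pset

theorem Pset_mono {r r' : ℝ} (h : r ≤ r') : Pset r ⊆ Pset r' :=
  fun _ hq => ⟨hq.1, hq.2.1, hq.2.2.trans h⟩

theorem snd_le_of_mem_Pset {r : ℝ} {q : E2 × ℝ} (hq : q ∈ Pset r) : q.2 ≤ r := by
  linarith [hq.2.2, sq_nonneg (‖q.1‖ - 1)]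

theorem parabolicGauge_pos_of_mem_Pset {r : ℝ} {q : E2 × ℝ} (hq : q ∈ Pset r) :
    0 < parabolicGauge q := by
  have : 0 < (‖q.1‖ - 1) ^ 2 := pow_pos (sub_pos.2 hq.1) 2
  unfold parabolicGauge; linarith [hq.2.1]

theorem parabolicGauge_div_nonneg_of_mem_Pset {R : ℝ} {q : E2 × ℝ} (hq : q ∈ Pset R) :
    0 ≤ parabolicGauge q / R :=
  div_nonneg (parabolicGauge_pos_of_mem_Pset hq).le
    ((parabolicGauge_pos_of_mem_Pset hq).le.trans hq.2.2)

section Psi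

variable {η : ℝ → ℝ} {p : ℝ}

theorem two_mul_conjExponent_pos (hp : 1 < p) : 0 < 2 * (p / (p - 1)) :=
  mul_pos two_pos (div_pos (by linarith) (by linarith))

theorem psiStar_nonneg (hη : etaOK η) (r : ℝ) (x : E2) (t : ℝ) : 0 ≤ psiStar η p r x t :=
  rpow_nonneg (etaStar_nonneg hη _) _

theorem psiStar_le_psi (hη : etaOK η) (hp : 1 < p) {r R : ℝ} {q : E2 × ℝ}
    (hq : 0 ≤ parabolicGauge q) (hr : 0 < r) (hrR : r ≤ R) :
    psiStar η p r q.1 q.2 ≤ psi η p R q.1 q.2 :=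
  rpow_le_rpow (etaStar_nonneg hη _)
    (etaStar_le_eta hη (div_nonneg hq (hr.le.trans hrR)) (div_le_div_of_nonneg_left hq hr hrR))
    (two_mul_conjExponent_pos hp).le

theorem psiStar_eq_zero (hp : 1 < p) {r : ℝ} {q : E2 × ℝ} (hr : 0 < r)
    (h : 2 * parabolicGauge q < r) : psiStar η p r q.1 q.2 = 0 := by
  have : parabolicGauge q / r < 1 / 2 := by rw [div_lt_iff₀ hr]; linarith
  change etaStar η (parabolicGauge q / r) ^ _ = 0
  rw [etaStar, if_pos this, zero_rpow (two_mul_conjExponent_pos hp).ne']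

theorem psi_mem_Icc_of_mem_Pset (hη : etaOK η) (hp : 1 < p) {R : ℝ} {q : E2 × ℝ}
    (hq : q ∈ Pset R) : psi η p R q.1 q.2 ∈ Icc 0 1 := by
  have hs := parabolicGauge_div_nonneg_of_mem_Pset hq
  exact ⟨rpow_nonneg (hη.nonneg_s6 hs) _,
    rpow_le_one (hη.nonneg_s6 hs) (hη.le_one_s6 hs) (two_mul_conjExponent_pos hp).le⟩

theorem continuousOn_psi (hη : etaOK η) (hp : 1 < p) (R : ℝ) :
    ContinuousOn (fun q : E2 × ℝ => psi η p R q.1 q.2) (Pset R) := by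
  refine ContinuousOn.rpow_const ?_ fun _ _ => Or.inr (two_mul_conjExponent_pos hp).le
  refine hη.1.continuousOn.comp (continuous_parabolicGauge.div_const R).continuousOn
    fun _ => parabolicGauge_div_nonneg_of_mem_Pset

theorem IntegrableOn.mul_psi (hη : etaOK η) (hp : 1 < p) {R : ℝ} {f : E2 × ℝ → ℝ}
    (hf : IntegrableOn f (Pset R)) :
    IntegrableOn (fun q => f q * psi η p R q.1 q.2) (Pset R) :=
  hf.mul_bdd ((continuousOn_psi hη hp R).aestronglyMeasurable (measurableSet_Pset R))
    ((ae_restrict_mem (measurableSet_Pset R)).mono fun _ hq => by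
      rw [norm_of_nonneg (psi_mem_Icc_of_mem_Pset hη hp hq).1]
      exact (psi_mem_Icc_of_mem_Pset hη hp hq).2)

end Psi

-- `∫ q, yDensity η p w r q = y(r) / r`.
def yDensity (η : ℝ → ℝ) (p : ℝ) (w : E2 → ℝ → ℝ) (r : ℝ) (q : E2 × ℝ) : ℝ :=
  (Pset r).indicator (fun q => w q.1 q.2 * psiStar η p r q.1 q.2) q * r⁻¹

section YDensity

variable {η : ℝ → ℝ} {p : ℝ} {w : E2 → ℝ → ℝ}

theorem measurable_yDensity (hη : etaOK η) (hw : Measurable fun q : E2 × ℝ => w q.1 q.2) :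
    Measurable (Function.uncurry (yDensity η p w)) := by
  have hpsiStar : Measurable fun z : ℝ × (E2 × ℝ) => psiStar η p z.1 z.2.1 z.2.2 :=
    ((measurable_etaStar hη).comp ((continuous_parabolicGauge.measurable.comp measurable_snd).div
      measurable_fst)).pow_const _
  exact (((hw.comp measurable_snd).mul hpsiStar).indicator measurableSet_setOf_mem_Pset).mul
    measurable_fst.inv

theorem yDensity_nonneg (hη : etaOK η) {r : ℝ} (hr : 0 ≤ r)
    (hw : ∀ q ∈ Pset r, 0 ≤ w q.1 q.2) (q : E2 × ℝ) : 0 ≤ yDensity η p w r q :=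
  mul_nonneg (indicator_nonneg (fun q hq => mul_nonneg (hw q hq) (psiStar_nonneg hη _ _ _)) q)
    (inv_nonneg.2 hr)

theorem yDensity_le_indicator_Icc (hη : etaOK η) (hp : 1 < p) {r R : ℝ} {q : E2 × ℝ}
    (hw : ∀ q ∈ Pset R, 0 ≤ w q.1 q.2) (hq : q ∈ Pset R) (hr : r ∈ Ioc 0 R) :
    yDensity η p w r q ≤ (Icc (parabolicGauge q) (2 * parabolicGauge q)).indicator
      (fun r => w q.1 q.2 * psi η p R q.1 q.2 * r⁻¹) r := by
  have hσ := parabolicGauge_pos_of_mem_Pset hq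
  have hbound_nonneg : 0 ≤ (Icc (parabolicGauge q) (2 * parabolicGauge q)).indicator
      (fun r => w q.1 q.2 * psi η p R q.1 q.2 * r⁻¹) r :=
    indicator_nonneg (fun _ hr' => mul_nonneg
      (mul_nonneg (hw q hq) (psi_mem_Icc_of_mem_Pset hη hp hq).1)
      (inv_nonneg.2 (hσ.le.trans hr'.1))) r
  by_cases hqr : q ∈ Pset r
  · by_cases h2 : r ≤ 2 * parabolicGauge q
    · rw [yDensity, indicator_of_mem hqr,
        indicator_of_mem
          (show r ∈ Icc (parabolicGauge q) (2 * parabolicGauge q) from ⟨hqr.2.2, h2⟩)]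
      exact mul_le_mul_of_nonneg_right
        (mul_le_mul_of_nonneg_left (psiStar_le_psi hη hp hσ.le hr.1 hr.2) (hw q hq))
        (inv_nonneg.2 hr.1.le)
    · rwa [yDensity, indicator_of_mem hqr, psiStar_eq_zero hp hr.1 (not_le.1 h2), mul_zero,
        zero_mul]
  · rwa [yDensity, indicator_of_notMem hqr, zero_mul]

theorem lintegral_yDensity_le (hη : etaOK η) (hp : 1 < p) {R : ℝ}
    (hw : ∀ q ∈ Pset R, 0 ≤ w q.1 q.2) (q : E2 × ℝ) :
    ∫⁻ r in Ioc 0 R, ENNReal.ofReal (yDensity η p w r q) ≤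
      ENNReal.ofReal ((Pset R).indicator (fun q => log 2 * (w q.1 q.2 * psi η p R q.1 q.2)) q) := by
  by_cases hq : q ∈ Pset R
  · rw [indicator_of_mem hq]
    exact setLIntegral_ofReal_le_log_two_mul measurableSet_Ioc (parabolicGauge_pos_of_mem_Pset hq)
      (mul_nonneg (hw q hq) (psi_mem_Icc_of_mem_Pset hη hp hq).1)
      fun r hr => yDensity_le_indicator_Icc hη hp hw hq hr
  · have hzero : ∀ r ∈ Ioc (0 : ℝ) R, ENNReal.ofReal (yDensity η p w r q) = 0 := fun r hr => by
      rw [yDensity, indicator_of_notMem fun h => hq (Pset_mono hr.2 h), zero_mul,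
        ENNReal.ofReal_zero]
    rw [setLIntegral_congr_fun measurableSet_Ioc hzero, lintegral_zero]
    exact zero_le

end YDensity

theorem statement6_general (p : ℝ) (hp : 1 < p) (η : ℝ → ℝ) (hη : etaOK η)
    (T : ℝ) (w : E2 → ℝ → ℝ)
    (hw_meas : Measurable fun q : E2 × ℝ => w q.1 q.2)
    (hw_nonneg : ∀ x : E2, ∀ t : ℝ, x ∈ Omega → 0 ≤ t → t < T → 0 ≤ w x t)
    (hw_int : ∀ R ∈ Set.Ioo (0 : ℝ) T,
      IntegrableOn (fun q : E2 × ℝ => w q.1 q.2) (Pset R))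
    (R : ℝ) (hR : R ∈ Set.Ioo (0 : ℝ) T) :
    ∫ r in (0 : ℝ)..R, (∫ q in Pset r, w q.1 q.2 * psiStar η p r q.1 q.2) * r⁻¹
      ≤ Real.log 2 * ∫ q in Pset R, w q.1 q.2 * psi η p R q.1 q.2 := by
  have hw : ∀ q ∈ Pset R, 0 ≤ w q.1 q.2 := fun q hq =>
    hw_nonneg q.1 q.2 hq.1 hq.2.1 ((snd_le_of_mem_Pset hq).trans_lt hR.2)
  have hLHS : ∫ r in (0 : ℝ)..R, (∫ q in Pset r, w q.1 q.2 * psiStar η p r q.1 q.2) * r⁻¹ =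
      ∫ r in Ioc 0 R, ∫ q, yDensity η p w r q := by
    rw [intervalIntegral.integral_of_le hR.1.le]
    simp only [yDensity, integral_mul_const, integral_indicator (measurableSet_Pset _)]
  rw [hLHS, ← integral_const_mul, ← integral_indicator (measurableSet_Pset R)]
  refine integral_integral_le_integral_of_lintegral_le (measurable_yDensity hη hw_meas) ?_
    ((integrable_indicator_iff (measurableSet_Pset R)).2
      ((IntegrableOn.mul_psi hη hp (hw_int R hR)).const_mul _)) ?_
    (lintegral_yDensity_le hη hp hw)
  · exact (ae_restrict_mem measurableSet_Ioc).mono fun r hr => Filter.Eventually.of_forall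
      (yDensity_nonneg hη hr.1.le fun q hq => hw q (Pset_mono hr.2 hq))
  · exact Filter.Eventually.of_forall (indicator_nonneg fun q hq =>
      mul_nonneg (log_nonneg one_le_two)
        (mul_nonneg (hw q hq) (psi_mem_Icc_of_mem_Pset hη hp hq).1))

/-- With `y(r) = ∬_{P(r)} w ψ*_r dx dt`, for every `R ∈ (0,T)` one has
`∫_0^R y(r) r⁻¹ dr ≤ (log 2) ∬_{P(R)} w ψ_R dx dt`. -/
theorem statement6 (p : ℝ) (hp : 1 < p) (η : ℝ → ℝ) (hη : etaOK η)
    (T : ℝ) (hT : 0 < T) (w : E2 → ℝ → ℝ)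
    (hw_meas : Measurable fun q : E2 × ℝ => w q.1 q.2)
    (hw_nonneg : ∀ x : E2, ∀ t : ℝ, x ∈ Omega → 0 ≤ t → t < T → 0 ≤ w x t)
    (hw_int : ∀ R ∈ Set.Ioo (0 : ℝ) T,
      IntegrableOn (fun q : E2 × ℝ => w q.1 q.2) (Pset R))
    (R : ℝ) (hR : R ∈ Set.Ioo (0 : ℝ) T) :
    ∫ r in (0 : ℝ)..R, (∫ q in Pset r, w q.1 q.2 * psiStar η p r q.1 q.2) * r⁻¹
      ≤ Real.log 2 * ∫ q in Pset R, w q.1 q.2 * psi η p R q.1 q.2 :=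
  statement6_general p hp η hη T w hw_meas hw_nonneg hw_int R hR
end
end

section
/- Let p > 1, θ ≥ 0, κ ∈ ℝ, δ > 0, C₀ > 0 and 1 < R₁ < T. Let Y : (0,T) → [0,∞) be nondecreasing, differentiable on (R₁,T), and suppose that for every R ∈ (R₁,T), (δ + (log 2)^{-1} Y(R))^{p} ≤ C₀^{p} R^{1−θ(p−1)} (log R)^{κ(p−1)} Y'(R). Then ∫_{log R₁}^{log T} e^{θ(p−1)s} s^{−κ(p−1)} ds ≤ (p−1)^{-1} (log 2) C₀^{p} δ^{-(p−1)}. -/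
/-!
In the variable `s = log R`, put `G s = δ + (log 2)⁻¹ Y(eˢ)`. The hypothesis says that the
integrand `e^{θ(p-1)s} s^{-κ(p-1)}` is at most `log 2 · C₀ᵖ · G⁻ᵖ G'`, the derivative of
`-log 2 · C₀ᵖ · G^{-(p-1)} / (p-1)`; integrating and using `G ≥ δ` bounds the integral by
`(p-1)⁻¹ log 2 · C₀ᵖ δ^{-(p-1)}`. As `Y` is only differentiable inside `(R₁, T)` and may jump
at its ends, this is done on compact subintervals of `(log R₁, log T)`, which then exhaust it.
-/

open MeasureTheory Real Set

noncomputable section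

theorem integral_le_of_forall_integral_Icc_subset_Ioo_le {f : ℝ → ℝ} {a b B : ℝ} (hab : a < b)
    (hf : IntervalIntegrable f volume a b)
    (h : ∀ a' b', a < a' → a' ≤ b' → b' < b → ∫ x in a'..b', f x ≤ B) :
    ∫ x in a..b, f x ≤ B := by
  set F : ℝ → ℝ := fun y => ∫ x in a..y, f x
  have hF : ContinuousOn F (Icc a b) := by
    simpa only [uIcc_of_le hab.le] using
      intervalIntegral.continuousOn_primitive_interval' hf left_mem_uIcc
  set c := (b - a) / 2
  have hc : 0 < c := by simp only [c]; linarith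
  have hmem : ∀ t ∈ Icc 0 c, a + t ∈ Icc a b ∧ b - t ∈ Icc a b := fun t ht => by
    simp only [c, mem_Icc] at ht ⊢; constructor <;> constructor <;> linarith
  have hg : ContinuousOn (fun t => F (b - t) - F (a + t)) (Icc 0 c) :=
    (hF.comp (by fun_prop) fun t ht => (hmem t ht).2).sub
      (hF.comp (by fun_prop) fun t ht => (hmem t ht).1)
  have hinner : ∀ t ∈ Ioc 0 c, F (b - t) - F (a + t) ≤ B := fun t ht => by
    obtain ⟨ha, hb⟩ := hmem t (Ioc_subset_Icc_self ht)
    have hsub : ∀ y ∈ Icc a b, IntervalIntegrable f volume a y := fun y hy =>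
      hf.mono_set (by rw [uIcc_of_le hab.le, uIcc_of_le hy.1]; exact Icc_subset_Icc_right hy.2)
    rw [intervalIntegral.integral_interval_sub_left (hsub _ hb) (hsub _ ha)]
    simp only [c, mem_Ioc] at ht
    exact h _ _ (by linarith) (by linarith) (by linarith)
  have h0 : (0 : ℝ) ∈ closure (Ioc 0 c) := by
    rw [closure_Ioc hc.ne]; exact ⟨le_rfl, hc.le⟩
  simpa [F] using ((hg 0 ⟨le_rfl, hc.le⟩).mono Ioc_subset_Icc_self).closure_le h0
    continuousWithinAt_const hinner

theorem HasDerivAt.neg_rpow_neg_sub_one_div {g : ℝ → ℝ} {g' x p : ℝ} (hg : HasDerivAt g g' x)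
    (hx : 0 < g x) (hp : p ≠ 1) :
    HasDerivAt (fun y => -g y ^ (-(p - 1)) / (p - 1)) (g x ^ (-p) * g') x := by
  refine ((hg.rpow_const (Or.inl hx.ne')).neg.div_const (p - 1)).congr_deriv ?_
  have : p - 1 ≠ 0 := sub_ne_zero.2 hp
  rw [show -(p - 1) - 1 = -p by ring]
  field_simp

theorem integral_le_of_le_rpow_neg_mul_deriv {f G G' : ℝ → ℝ} {a b p δ K : ℝ} (hab : a ≤ b)
    (hp : 1 < p) (hδ : 0 < δ) (hK : 0 ≤ K) (hGδ : ∀ s ∈ Icc a b, δ ≤ G s)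
    (hG : ∀ s ∈ Icc a b, HasDerivAt G (G' s) s) (hf : IntegrableOn f (Icc a b))
    (hfG : ∀ s ∈ Ioo a b, f s ≤ K * (G s ^ (-p) * G' s)) :
    ∫ s in a..b, f s ≤ (p - 1)⁻¹ * K * δ ^ (-(p - 1)) := by
  set Φ : ℝ → ℝ := fun s => K * (-G s ^ (-(p - 1)) / (p - 1))
  have hGpos : ∀ s ∈ Icc a b, 0 < G s := fun s hs => hδ.trans_le (hGδ s hs)
  have hΦ : ∀ s ∈ Icc a b, HasDerivAt Φ (K * (G s ^ (-p) * G' s)) s := fun s hs =>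
    ((hG s hs).neg_rpow_neg_sub_one_div (hGpos s hs) hp.ne').const_mul K
  have hGb : 0 ≤ G b ^ (-(p - 1)) := rpow_nonneg (hGpos b ⟨hab, le_rfl⟩).le _
  have hGa : G a ^ (-(p - 1)) ≤ δ ^ (-(p - 1)) :=
    rpow_le_rpow_of_nonpos hδ (hGδ a ⟨le_rfl, hab⟩) (by linarith)
  have hp1 : 0 < p - 1 := by linarith
  calc ∫ s in a..b, f s ≤ Φ b - Φ a :=
        intervalIntegral.integral_le_sub_of_hasDeriv_right_of_le hab
          (fun s hs => (hΦ s hs).continuousAt.continuousWithinAt)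
          (fun s hs => (hΦ s (Ioo_subset_Icc_self hs)).hasDerivWithinAt) hf hfG
    _ = (p - 1)⁻¹ * K * (G a ^ (-(p - 1)) - G b ^ (-(p - 1))) := by
        simp only [Φ]; field_simp; ring
    _ ≤ (p - 1)⁻¹ * K * δ ^ (-(p - 1)) := by
        gcongr; linarith

theorem rpow_mul_rpow_neg_le_of_rpow_le {R L G K D p α β : ℝ} (hR : 0 < R) (hL : 0 < L)
    (hG : 0 < G) (h : G ^ p ≤ K * R ^ (1 - α) * L ^ β * D) :
    R ^ α * L ^ (-β) ≤ K * G ^ (-p) * D * R := by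
  have hRα : R ^ α * R ^ (1 - α) = R := by rw [← rpow_add hR]; simp
  rw [rpow_neg hL.le, rpow_neg hG.le, ← div_eq_mul_inv, div_le_iff₀ (rpow_pos_of_pos hL β),
    show K * (G ^ p)⁻¹ * D * R * L ^ β = (G ^ p)⁻¹ * (K * D * R * L ^ β) by ring,
    le_inv_mul_iff₀ (rpow_pos_of_pos hG p)]
  calc G ^ p * R ^ α ≤ K * R ^ (1 - α) * L ^ β * D * R ^ α := by gcongr
    _ = K * D * (R ^ α * R ^ (1 - α)) * L ^ β := by ring
    _ = K * D * R * L ^ β := by rw [hRα]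

theorem continuousOn_exp_const_mul_mul_rpow_const (c e : ℝ) :
    ContinuousOn (fun s => exp (c * s) * s ^ e) (Ioi 0) := fun s hs =>
  ContinuousAt.continuousWithinAt <| by fun_prop (disch := exact Or.inl (ne_of_gt hs))

theorem statement8_general (p θ κ δ C₀ R₁ T : ℝ) (hp : 1 < p) (hδ : 0 < δ)
    (hC₀ : 0 < C₀) (hR₁ : 1 < R₁) (hT : R₁ < T)
    (Y : ℝ → ℝ)
    (hY0 : ∀ R ∈ Set.Ioo (0 : ℝ) T, 0 ≤ Y R)
    (hYd : ∀ R ∈ Set.Ioo R₁ T, DifferentiableAt ℝ Y R)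
    (hY : ∀ R ∈ Set.Ioo R₁ T,
      (δ + (Real.log 2)⁻¹ * Y R) ^ p
        ≤ C₀ ^ p * R ^ (1 - θ * (p - 1)) * Real.log R ^ (κ * (p - 1)) * deriv Y R) :
    ∫ s in Real.log R₁..Real.log T, Real.exp (θ * (p - 1) * s) * s ^ (-(κ * (p - 1)))
      ≤ (p - 1)⁻¹ * Real.log 2 * C₀ ^ p * δ ^ (-(p - 1)) := by
  have hlogR₁ : 0 < log R₁ := log_pos hR₁
  have hlog2 : 0 < log 2 := log_pos one_lt_two
  have hcont := continuousOn_exp_const_mul_mul_rpow_const (θ * (p - 1)) (-(κ * (p - 1)))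
  refine integral_le_of_forall_integral_Icc_subset_Ioo_le (log_lt_log (by linarith) hT)
    ((hcont.mono fun s hs => ?_).intervalIntegrable) fun a b ha hab hb => ?_
  · exact hlogR₁.trans_le (le_min le_rfl (log_le_log (by linarith) hT.le) |>.trans hs.1)
  have hexp : ∀ s ∈ Icc a b, exp s ∈ Ioo R₁ T := fun s hs =>
    ⟨(log_lt_iff_lt_exp (by linarith)).1 (ha.trans_le hs.1),
      (lt_log_iff_exp_lt (by linarith)).1 (hs.2.trans_lt hb)⟩
  have hGδ : ∀ s ∈ Icc a b, δ ≤ δ + (log 2)⁻¹ * Y (exp s) := fun s hs =>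
    le_add_of_nonneg_right <| mul_nonneg (inv_nonneg.2 hlog2.le) (hY0 _ ⟨exp_pos s, (hexp s hs).2⟩)
  rw [mul_assoc _ (log 2)]
  refine integral_le_of_le_rpow_neg_mul_deriv (G := fun s => δ + (log 2)⁻¹ * Y (exp s))
    (G' := fun s => (log 2)⁻¹ * (deriv Y (exp s) * exp s)) hab hp hδ (by positivity) hGδ ?_ ?_ ?_
  · exact fun s hs =>
      (((hYd _ (hexp s hs)).hasDerivAt.comp s (hasDerivAt_exp s)).const_mul _).const_add δ
  · exact (hcont.mono fun s hs => hlogR₁.trans (ha.trans_le hs.1)).integrableOn_compact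
      isCompact_Icc
  · intro s hs
    have key := rpow_mul_rpow_neg_le_of_rpow_le (exp_pos s) (hlogR₁.trans (ha.trans hs.1))
      (hδ.trans_le (hGδ s (Ioo_subset_Icc_self hs)))
      (log_exp s ▸ hY _ (hexp s (Ioo_subset_Icc_self hs)))
    rw [← exp_mul, mul_comm s] at key
    exact key.trans_eq (by field_simp)

/-- If `Y ≥ 0` is nondecreasing on `(0,T)`, differentiable on `(R₁,T)`, and
`(δ + (log 2)⁻¹ Y(R))^p ≤ C₀^p R^{1−θ(p−1)} (log R)^{κ(p−1)} Y'(R)` on `(R₁,T)`, then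
`∫_{log R₁}^{log T} e^{θ(p−1)s} s^{−κ(p−1)} ds ≤ (p−1)⁻¹ (log 2) C₀^p δ^{-(p−1)}`. -/
theorem statement8 (p θ κ δ C₀ R₁ T : ℝ) (hp : 1 < p) (hθ : 0 ≤ θ) (hδ : 0 < δ)
    (hC₀ : 0 < C₀) (hR₁ : 1 < R₁) (hT : R₁ < T)
    (Y : ℝ → ℝ)
    (hY0 : ∀ R ∈ Set.Ioo (0 : ℝ) T, 0 ≤ Y R)
    (hYmono : MonotoneOn Y (Set.Ioo (0 : ℝ) T))
    (hYd : ∀ R ∈ Set.Ioo R₁ T, DifferentiableAt ℝ Y R)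
    (hY : ∀ R ∈ Set.Ioo R₁ T,
      (δ + (Real.log 2)⁻¹ * Y R) ^ p
        ≤ C₀ ^ p * R ^ (1 - θ * (p - 1)) * Real.log R ^ (κ * (p - 1)) * deriv Y R) :
    ∫ s in Real.log R₁..Real.log T, Real.exp (θ * (p - 1) * s) * s ^ (-(κ * (p - 1)))
      ≤ (p - 1)⁻¹ * Real.log 2 * C₀ ^ p * δ ^ (-(p - 1)) :=
  statement8_general p θ κ δ C₀ R₁ T hp hδ hC₀ hR₁ hT Y hY0 hYd hY
end
end
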